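/- Let L : Φ(n) → R be a loss function defined via a G(n)-invariant model, i.e., L(φ) = L(gφ) for all g ∈ G(n). Then for any pure translation h = (c_W, c_b, id_n) ∈ G(n) and any φ_A, φ_B ∈ Φ(n), the loss barrier satisfies B(φ_A, hφ_B) = B(φ_A, φ_B), where B(φ_A, φ_B) = sup_{t∈[0,1]} [L(tφ_A + (1−t)φ_B) − (t L(φ_A) + (1−t) L(φ_B))]. -/

import Mathlib

/-- Weight space of a Mixture-of-`n`-Experts: `Φ(n) = (ℝ^d × ℝ × ℝ^e)^n`. -/
abbrev MoEWeights (d e n : ℕ) := Fin n → (Fin d → ℝ) × ℝ × (Fin e → ℝ)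

/-- Action of `g = (c_W, c_b, τ) ∈ G(n) = ℝ^d × ℝ × S_n` on the weight space. -/
def actG {d e n : ℕ} (cW : Fin d → ℝ) (cb : ℝ) (τ : Equiv.Perm (Fin n))
    (φ : MoEWeights d e n) : MoEWeights d e n :=
  fun i => ((φ (τ i)).1 + cW, (φ (τ i)).2.1 + cb, (φ (τ i)).2.2)

/-- The loss barrier. -/
noncomputable def barrier {d e n : ℕ} (L : MoEWeights d e n → ℝ)
    (φA φB : MoEWeights d e n) : ℝ :=
  ⨆ t : Set.Icc (0 : ℝ) 1,
    (L ((t : ℝ) • φA + (1 - (t : ℝ)) • φB) -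
      ((t : ℝ) * L φA + (1 - (t : ℝ)) * L φB))

/-! Interpolation commutes with a pure translation up to rescaling it,
`t φA + (1 - t) (h φB) = h_{1-t} (t φA + (1 - t) φB)`, so by invariance of `L` each term of the
supremum defining the barrier is unchanged. -/

lemma actG_one_eq_add {d e n : ℕ} (cW : Fin d → ℝ) (cb : ℝ) (φ : MoEWeights d e n) :
    actG cW cb 1 φ = φ + fun _ => (cW, cb, 0) := by
  funext i
  simp [actG, Prod.add_def]

lemma smul_add_smul_actG_one {d e n : ℕ} (cW : Fin d → ℝ) (cb : ℝ) (a b : ℝ)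
    (φ ψ : MoEWeights d e n) :
    a • φ + b • actG cW cb 1 ψ = actG (b • cW) (b * cb) 1 (a • φ + b • ψ) := by
  simp only [actG_one_eq_add, smul_add, add_assoc]
  congr 2
  funext i
  simp

theorem barrier_translation_invariant {d e n : ℕ}
    (L : MoEWeights d e n → ℝ)
    (hL : ∀ (cW : Fin d → ℝ) (cb : ℝ) (τ : Equiv.Perm (Fin n)) (φ : MoEWeights d e n),
      L (actG cW cb τ φ) = L φ)
    (cW : Fin d → ℝ) (cb : ℝ) (φA φB : MoEWeights d e n) :
    barrier L φA (actG cW cb 1 φB) = barrier L φA φB := by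
  refine iSup_congr fun t => ?_
  rw [smul_add_smul_actG_one, hL, hL]
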